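/- Let k ≥ 2 be an even integer, a = π/k, and let q : (0,π) → ℂ be any function. Then for every t ∈ (0,a), the function W_{1,1} associated with q satisfies ∑_{j=0}^{k/2−1} (−1)^j W_{1,1}(2ja + t) + ∑_{j=1}^{k/2} (−1)^j W_{1,1}(2ja − t) = 0. -/
import Mathlib


/-- The function `W_{1,1}` associated with `q`, where `a = π/k`. -/
noncomputable def W11 (k : ℕ) (q : ℝ → ℂ) (t : ℝ) : ℂ :=
  let a := Real.pi / k
  if t ∈ Set.Ioo 0 a then
    -(q (((k : ℝ) - 1) * a + t) + q (((k : ℝ) - 1) * a - t)) / 2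
  else if t ∈ Set.Ioo a (((k : ℝ) - 1) * a) then
    -(q (((k : ℝ) + 1) * a - t) + q (((k : ℝ) - 1) * a - t)) / 2
  else if t ∈ Set.Ioo (((k : ℝ) - 1) * a) Real.pi then
    -(q (((k : ℝ) + 1) * a - t) + q (t - ((k : ℝ) - 1) * a)) / 2
  else 0

lemma W11_one {k : ℕ} (q : ℝ → ℂ) {x : ℝ} (hx : x ∈ Set.Ioo 0 (Real.pi/k)) :
    W11 k q x = -(q (((k:ℝ)-1)*(Real.pi/k) + x) + q (((k:ℝ)-1)*(Real.pi/k) - x))/2 := by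
  simp only [W11]
  rw [if_pos hx]

lemma W11_two {k : ℕ} (q : ℝ → ℂ) {x : ℝ}
    (hx : x ∈ Set.Ioo (Real.pi/k) (((k:ℝ)-1)*(Real.pi/k))) :
    W11 k q x = -(q (((k:ℝ)+1)*(Real.pi/k) - x) + q (((k:ℝ)-1)*(Real.pi/k) - x))/2 := by
  simp only [W11]
  rw [if_neg, if_pos hx]
  intro h
  exact absurd hx.1 (not_lt.mpr h.2.le)

lemma W11_three {k : ℕ} (hk : 2 ≤ k) (q : ℝ → ℂ) {x : ℝ}
    (hx : x ∈ Set.Ioo (((k:ℝ)-1)*(Real.pi/k)) Real.pi) :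
    W11 k q x = -(q (((k:ℝ)+1)*(Real.pi/k) - x) + q (x - ((k:ℝ)-1)*(Real.pi/k)))/2 := by
  have hk0 : (0:ℝ) < k := by exact_mod_cast Nat.lt_of_lt_of_le (by norm_num) hk
  have ha0 : 0 < Real.pi / k := div_pos Real.pi_pos hk0
  have hk2 : (2:ℝ) ≤ k := by exact_mod_cast hk
  have h1 : Real.pi / k ≤ ((k:ℝ)-1)*(Real.pi/k) := by nlinarith
  simp only [W11]
  rw [if_neg, if_neg, if_pos hx]
  · intro h; exact absurd hx.1 (not_lt.mpr h.2.le)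
  · intro h; exact absurd (lt_of_le_of_lt h1 hx.1) (not_lt.mpr h.2.le)

theorem W11_degeneration (k : ℕ) (hk : 2 ≤ k) (heven : Even k) (q : ℝ → ℂ) :
    ∀ t ∈ Set.Ioo (0:ℝ) (Real.pi / k),
      ∑ j ∈ Finset.range (k / 2),
          (-1 : ℂ) ^ j * W11 k q (2 * j * (Real.pi / k) + t) +
        ∑ j ∈ Finset.Icc 1 (k / 2),
          (-1 : ℂ) ^ j * W11 k q (2 * j * (Real.pi / k) - t) = 0 := by
  intro t ht
  obtain ⟨ht0, hta⟩ := ht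
  obtain ⟨n, hn⟩ := heven
  obtain ⟨m, rfl⟩ : ∃ m, n = m + 1 := ⟨n - 1, by omega⟩
  have hhalf : k / 2 = m + 1 := by omega
  have hk0 : (0:ℝ) < k := by exact_mod_cast Nat.lt_of_lt_of_le (by norm_num) hk
  have ha0 : 0 < Real.pi / k := div_pos Real.pi_pos hk0
  have hka : (k:ℝ) * (Real.pi / k) = Real.pi := by field_simp
  have hkR : (k:ℝ) = 2*(m:ℝ) + 2 := by rw [hn]; push_cast; ring
  set a : ℝ := Real.pi / k with ha
  rw [hhalf]
  rw [Finset.sum_range_succ']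
  rw [← Finset.Ico_add_one_right_eq_Icc, Finset.sum_Ico_eq_sum_range]
  have hrange : m + 1 + 1 - 1 = m + 1 := by omega
  rw [hrange, Finset.sum_range_succ]
  -- the telescoping summand
  set d : ℕ → ℂ := fun j =>
    (-1:ℂ)^j * (q (((k:ℝ)-1-2*(j:ℝ))*a - t) + q (((k:ℝ)-1-2*(j:ℝ))*a + t)) / 2 with hd
  have key : ∀ i ∈ Finset.range m,
      (-1:ℂ)^(i+1) * W11 k q (2 * ((i+1 : ℕ):ℝ) * a + t)
        + (-1:ℂ)^(1+i) * W11 k q (2 * ((1+i : ℕ):ℝ) * a - t) = d i - d (i+1) := by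
    intro i hi
    have him : (i:ℝ) + 1 ≤ (m:ℝ) := by
      exact_mod_cast Nat.succ_le_of_lt (Finset.mem_range.mp hi)
    have hmul : 2 * ((i:ℝ)+1) * a ≤ 2 * (m:ℝ) * a := by nlinarith
    have hmul2 : 2 * a ≤ 2 * ((i:ℝ)+1) * a := by nlinarith [Nat.cast_nonneg (α := ℝ) i]
    have hx1 : 2 * ((i:ℝ)+1) * a + t ∈ Set.Ioo a (((k:ℝ)-1)*a) :=
      ⟨by linarith, by nlinarith⟩
    have hx2 : 2 * ((i:ℝ)+1) * a - t ∈ Set.Ioo a (((k:ℝ)-1)*a) :=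
      ⟨by linarith, by nlinarith⟩
    have e1 : (2 * ((i+1 : ℕ):ℝ) * a + t : ℝ) = 2 * ((i:ℝ)+1) * a + t := by push_cast; ring
    have e2 : (2 * ((1+i : ℕ):ℝ) * a - t : ℝ) = 2 * ((i:ℝ)+1) * a - t := by push_cast; ring
    rw [e1, e2, W11_two q hx1, W11_two q hx2, ← ha]
    have g1 : ((k:ℝ)+1)*a - (2*((i:ℝ)+1)*a + t) = ((k:ℝ)-1-2*(i:ℝ))*a - t := by ring
    have g2 : ((k:ℝ)-1)*a - (2*((i:ℝ)+1)*a + t) = ((k:ℝ)-1-2*((i:ℝ)+1))*a - t := by ring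
    have g3 : ((k:ℝ)+1)*a - (2*((i:ℝ)+1)*a - t) = ((k:ℝ)-1-2*(i:ℝ))*a + t := by ring
    have g4 : ((k:ℝ)-1)*a - (2*((i:ℝ)+1)*a - t) = ((k:ℝ)-1-2*((i:ℝ)+1))*a + t := by ring
    rw [g1, g2, g3, g4, hd]
    simp only []
    push_cast
    ring
  have hsum : ∑ i ∈ Finset.range m,
      ((-1:ℂ)^(i+1) * W11 k q (2 * ((i+1 : ℕ):ℝ) * a + t)
        + (-1:ℂ)^(1+i) * W11 k q (2 * ((1+i : ℕ):ℝ) * a - t)) = d 0 - d m := by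
    rw [Finset.sum_congr rfl key]
    exact Finset.sum_range_sub' d m
  rw [Finset.sum_add_distrib] at hsum
  -- boundary term j = 0
  have hT0 : (2 * (((0:ℕ)):ℝ) * a + t : ℝ) = t := by push_cast; ring
  have hW0 : W11 k q t = -(q (((k:ℝ)-1)*a + t) + q (((k:ℝ)-1)*a - t))/2 :=
    W11_one q ⟨ht0, hta⟩
  -- boundary term j = m+1
  have hTm : (2 * ((1+m : ℕ):ℝ) * a - t : ℝ) = Real.pi - t := by
    push_cast
    rw [← hka, hkR]; ring
  have hk1a : ((k:ℝ)-1)*a = Real.pi - a := by rw [← hka]; ring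
  have hxm : Real.pi - t ∈ Set.Ioo (((k:ℝ)-1)*a) Real.pi :=
    ⟨by rw [hk1a]; linarith, by linarith⟩
  have hWm : W11 k q (Real.pi - t) = -(q (a + t) + q (a - t))/2 := by
    rw [W11_three hk q hxm, ← ha]
    have r1 : ((k:ℝ)+1)*a - (Real.pi - t) = a + t := by rw [← hka]; ring
    have r2 : (Real.pi - t) - ((k:ℝ)-1)*a = a - t := by rw [← hka]; ring
    rw [r1, r2]
  -- values of d at the endpoints
  have hd0 : d 0 = (q (((k:ℝ)-1)*a - t) + q (((k:ℝ)-1)*a + t)) / 2 := by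
    rw [hd]; push_cast; ring_nf
  have hdm : d m = (-1:ℂ)^m * (q (a - t) + q (a + t)) / 2 := by
    rw [hd]
    have s1 : ((k:ℝ)-1-2*(m:ℝ))*a - t = a - t := by rw [hkR]; ring
    have s2 : ((k:ℝ)-1-2*(m:ℝ))*a + t = a + t := by rw [hkR]; ring
    simp only []
    rw [s1, s2]
  rw [hd0, hdm] at hsum
  rw [hT0, hTm, hW0, hWm]
  linear_combination hsum
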